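/- One-step invariant preservation: Let f be monotone submodular with f(∅) ≥ 0, α > 0, |T| = k, T ⊆ A, and suppose f(T) ≥ (α/(α+1))·f(A). Let u ∉ A satisfy Δ(u, T) ≥ (α/k)·f(T), and let T_new = T ∪ {u} \ {y*} where y* attains Δ(u, T), and A_new = A ∪ {u}. Then f(T_new) ≥ (α/(α+1))·f(A_new). -/

import Mathlib

/-!
Swapping `u` in for the best `y ∈ T` loses, relative to `T ∪ {u}`, at most the average of the
losses `f (T ∪ {u}) - f (T ∪ {u} \ {z})` over `z ∈ T`; by submodularity these losses sum to at
most `f T - f ∅`. Hence `Δ(u, T) ≥ f(u | A) - f T / k`, which together with the threshold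
`Δ(u, T) ≥ (α / k) f T` gives `(α + 1) Δ(u, T) ≥ α f(u | A)`. Adding the invariant
`(α + 1) f T ≥ α f A` yields the claim.
-/

def Submodular {Ω : Type*} [DecidableEq Ω] (f : Finset Ω → ℝ) : Prop :=
  ∀ S T : Finset Ω, S ⊆ T → ∀ x ∉ T, f (insert x T) - f T ≤ f (insert x S) - f S

namespace Submodular

variable {Ω : Type*} [DecidableEq Ω] {f : Finset Ω → ℝ}

theorem sum_sub_erase_le (hsub : Submodular f) {S T : Finset Ω} (hST : S ⊆ T) :
    ∑ z ∈ S, (f T - f (T.erase z)) ≤ f T - f (T \ S) := by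
  induction S using Finset.induction_on with
  | empty => simp
  | @insert x S hxS ih =>
    have hxT : x ∈ T := hST (Finset.mem_insert_self x S)
    have hle : T \ insert x S ⊆ T.erase x := by
      rw [Finset.sdiff_insert]; exact Finset.erase_subset_erase x Finset.sdiff_subset
    have hloss := hsub _ _ hle x (Finset.notMem_erase x T)
    have hinsert : insert x (T \ insert x S) = T \ S := by grind
    rw [Finset.insert_erase hxT, hinsert] at hloss
    rw [Finset.sum_insert hxS]
    linarith [ih ((Finset.subset_insert x S).trans hST)]

theorem card_mul_swap_loss_le (hsub : Submodular f) {T : Finset Ω} {u y : Ω} (hu : u ∉ T)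
    (hmax : ∀ z ∈ T, f (insert u (T.erase z)) ≤ f (insert u (T.erase y))) :
    T.card * (f (insert u T) - f (insert u (T.erase y))) ≤ f T - f ∅ := by
  have hloss : ∀ z ∈ T, f (insert u T) - f (insert u (T.erase y)) ≤
      f (insert u T) - f ((insert u T).erase z) := fun z hz => by
    rw [Finset.erase_insert_of_ne (ne_of_mem_of_not_mem hz hu).symm]
    linarith [hmax z hz]
  have hsum := hsub.sum_sub_erase_le (Finset.subset_insert u T)
  have hsingleton : insert u T \ T = {u} := by grind
  rw [hsingleton] at hsum
  have hmarginal := hsub ∅ T (Finset.empty_subset T) u hu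
  calc T.card * (f (insert u T) - f (insert u (T.erase y)))
      ≤ ∑ z ∈ T, (f (insert u T) - f ((insert u T).erase z)) := by
        simpa using T.card_nsmul_le_sum _ _ hloss
    _ ≤ f T - f ∅ := by rw [Finset.insert_empty] at hmarginal; linarith

theorem marginal_sub_le_swap_gain (hsub : Submodular f) (h0 : 0 ≤ f ∅) {T A : Finset Ω}
    {u y : Ω} (hTA : T ⊆ A) (hu : u ∉ A)
    (hmax : ∀ z ∈ T, f (insert u (T.erase z)) ≤ f (insert u (T.erase y))) :
    f (insert u A) - f A - f T / T.card ≤ f (insert u (T.erase y)) - f T := by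
  have hmarginal := hsub T A hTA u hu
  have hloss : f (insert u T) - f (insert u (T.erase y)) ≤ f T / T.card := by
    rcases T.eq_empty_or_nonempty with rfl | hT
    · simp
    rw [le_div_iff₀ (by positivity), mul_comm]
    linarith [hsub.card_mul_swap_loss_le (fun h => hu (hTA h)) hmax]
  linarith

end Submodular

theorem stmt_4_general {Ω : Type*} [DecidableEq Ω] (f : Finset Ω → ℝ)
    (hsub : Submodular f) (h0 : 0 ≤ f ∅)
    (α : ℝ) (hα : 0 < α) (k : ℕ)
    (T A : Finset Ω) (hTk : T.card = k) (hTA : T ⊆ A)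
    (hinv : f T ≥ α / (α + 1) * f A)
    (u : Ω) (hu : u ∉ A)
    (y : Ω)
    (hmax : ∀ z ∈ T, f (insert u (T.erase z)) ≤ f (insert u (T.erase y)))
    (hthresh : f (insert u (T.erase y)) - f T ≥ α / k * f T) :
    f (insert u (T.erase y)) ≥ α / (α + 1) * f (insert u A) := by
  have hgain := hsub.marginal_sub_le_swap_gain h0 hTA hu hmax
  rw [hTk] at hgain
  have hα1 : 0 < α + 1 := by linarith
  rw [ge_iff_le, div_mul_eq_mul_div, div_le_iff₀ hα1] at hinv ⊢
  have hthresh' : α * (f T / k) ≤ f (insert u (T.erase y)) - f T := by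
    rw [← mul_div_assoc, ← div_mul_eq_mul_div]; exact hthresh
  have hstep : α * (f (insert u A) - f A) ≤ (α + 1) * (f (insert u (T.erase y)) - f T) := by
    linarith [mul_le_mul_of_nonneg_left hgain hα.le]
  linarith

theorem stmt_4 {Ω : Type*} [DecidableEq Ω] (f : Finset Ω → ℝ)
    (hsub : Submodular f) (hmono : Monotone f) (h0 : 0 ≤ f ∅)
    (α : ℝ) (hα : 0 < α) (k : ℕ) (hk : 0 < k)
    (T A : Finset Ω) (hTk : T.card = k) (hTA : T ⊆ A)
    (hinv : f T ≥ α / (α + 1) * f A)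
    (u : Ω) (hu : u ∉ A)
    (y : Ω) (hy : y ∈ T)
    (hmax : ∀ z ∈ T, f (insert u (T.erase z)) ≤ f (insert u (T.erase y)))
    (hthresh : f (insert u (T.erase y)) - f T ≥ α / k * f T) :
    f (insert u (T.erase y)) ≥ α / (α + 1) * f (insert u A) :=
  stmt_4_general f hsub h0 α hα k T A hTk hTA hinv u hu y hmax hthresh
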